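/- ∑_{m=2}^∞ H_{m-1}/m² = ζ(3) < 3/2, where H_m is the m-th harmonic number. -/

import Mathlib

open Finset Filter Topology

lemma harmonic_real (n : ℕ) : (harmonic n : ℝ) = ∑ i ∈ Finset.range n, (1:ℝ)/((i:ℝ)+1) := by
  rw [harmonic]; push_cast; simp [one_div]

lemma harmonic_nonneg' (n : ℕ) : (0:ℝ) ≤ (harmonic n : ℝ) := by
  rcases Nat.eq_zero_or_pos n with h|h
  · simp [h]
  · exact_mod_cast (harmonic_pos (Nat.pos_iff_ne_zero.mp h)).le

lemma harmonic_le_sqrt (n : ℕ) : (harmonic n : ℝ) ≤ 2 * Real.sqrt n := by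
  induction n with
  | zero => simp
  | succ n ih =>
    rw [harmonic_succ]
    push_cast
    set a := Real.sqrt ((n:ℝ)+1) with ha
    set b := Real.sqrt (n:ℝ) with hb
    have hab : b ≤ a := Real.sqrt_le_sqrt (by linarith)
    have hb0 : 0 ≤ b := Real.sqrt_nonneg _
    have ha0 : 0 ≤ a := Real.sqrt_nonneg _
    have e1 : a ^ 2 = (n:ℝ)+1 := Real.sq_sqrt (by positivity)
    have e2 : b ^ 2 = (n:ℝ) := Real.sq_sqrt (by positivity)
    have ha1 : a ≤ (n:ℝ)+1 := by nlinarith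
    have key : (a - b) * (a + b) = 1 := by nlinarith
    have h1 : ((n:ℝ)+1)⁻¹ ≤ 2*a - 2*b := by
      rw [inv_le_iff_one_le_mul₀ (by positivity)]
      nlinarith [mul_le_mul_of_nonneg_left ha1 (sub_nonneg.mpr hab)]
    linarith

lemma sum_rpow32 : Summable (fun n : ℕ => (1:ℝ)/(((n:ℝ)+1)^((3:ℝ)/2))) := by
  have h := (Real.summable_one_div_nat_rpow (p := 3/2)).mpr (by norm_num)
  have h2 := h.comp_injective (add_left_injective 1)
  convert h2 using 2 with n
  · rfl
  simp [Function.comp]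

set_option maxHeartbeats 1000000 in
lemma sumH1 : Summable (fun n : ℕ => (harmonic (n+1) : ℝ)/((n:ℝ)+1)^2) := by
  refine Summable.of_nonneg_of_le (f := fun n : ℕ => 2 * ((1:ℝ)/(((n:ℝ)+1)^((3:ℝ)/2))))
    (fun n => div_nonneg (harmonic_nonneg' _) (by positivity)) (fun n => ?_)
    (sum_rpow32.mul_left 2)
  set x : ℝ := (n:ℝ)+1 with hx
  have hx0 : (0:ℝ) < x := by positivity
  have hs : Real.sqrt x * x ^ ((3:ℝ)/2) = x^2 := by
    rw [Real.sqrt_eq_rpow, ← Real.rpow_add hx0]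
    norm_num
  have hh : (harmonic (n+1) : ℝ) ≤ 2 * Real.sqrt x := by
    have := harmonic_le_sqrt (n+1)
    push_cast at this
    exact this
  rw [div_le_iff₀ (by positivity)]
  calc (harmonic (n+1) : ℝ) ≤ 2 * Real.sqrt x := hh
    _ = 2 * ((1:ℝ)/ x ^ ((3:ℝ)/2)) * x^2 := by
        have hne : x ^ ((3:ℝ)/2) ≠ 0 := by positivity
        field_simp
        linear_combination hs

lemma sumH2 : Summable (fun n : ℕ => (harmonic (n+1) : ℝ)/((n:ℝ)+2)^2) := by
  apply Summable.of_nonneg_of_le (fun n => div_nonneg (harmonic_nonneg' _) (by positivity)) _ sumH1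
  intro n
  gcongr
  · exact harmonic_nonneg' _
  · linarith

lemma sumCube : Summable (fun n : ℕ => (1:ℝ)/((n:ℝ)+1)^3) := by
  have h := (Real.summable_one_div_nat_pow (p := 3)).mpr (by norm_num)
  have h2 := h.comp_injective (add_left_injective 1)
  convert h2 using 2 with n
  · rfl
  simp [Function.comp]

lemma harmonic_block (a b : ℕ) :
    (harmonic (a+b) : ℝ) - harmonic a = ∑ m ∈ Finset.range b, (1:ℝ)/((a:ℝ)+(m:ℝ)+1) := by
  rw [harmonic_real, harmonic_real, Finset.sum_range_add]
  simp only [add_sub_cancel_left]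
  apply Finset.sum_congr rfl
  intro m _
  push_cast
  ring_nf

lemma harmonic_block_nonneg (a b : ℕ) : (0:ℝ) ≤ (harmonic (a+b) : ℝ) - harmonic a := by
  rw [harmonic_block]
  apply Finset.sum_nonneg
  intro m _
  positivity

lemma harmonic_block_le (a b : ℕ) :
    (harmonic (a+b) : ℝ) - harmonic a ≤ (b:ℝ) * (1/((a:ℝ)+1)) := by
  rw [harmonic_block]
  calc ∑ m ∈ Finset.range b, (1:ℝ)/((a:ℝ)+(m:ℝ)+1)
      ≤ ∑ m ∈ Finset.range b, (1:ℝ)/((a:ℝ)+1) := by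
        apply Finset.sum_le_sum
        intro m _
        apply one_div_le_one_div_of_le (by positivity)
        have : (0:ℝ) ≤ (m:ℝ) := Nat.cast_nonneg m
        linarith
    _ = (b:ℝ) * (1/((a:ℝ)+1)) := by rw [Finset.sum_const, Finset.card_range, nsmul_eq_mul]

lemma teleH (k : ℕ) :
    HasSum (fun m : ℕ => (1:ℝ)/((m:ℝ)+1) - 1/((m:ℝ)+(k:ℝ)+2)) ((harmonic (k+1) : ℝ)) := by
  have hnn : ∀ m : ℕ, 0 ≤ (1:ℝ)/((m:ℝ)+1) - 1/((m:ℝ)+(k:ℝ)+2) := by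
    intro m
    have h1 : (1:ℝ)/((m:ℝ)+(k:ℝ)+2) ≤ 1/((m:ℝ)+1) := by
      apply one_div_le_one_div_of_le (by positivity)
      have : (0:ℝ) ≤ (k:ℝ) := Nat.cast_nonneg k
      linarith
    linarith
  rw [hasSum_iff_tendsto_nat_of_nonneg hnn]
  have hps : ∀ N : ℕ, ∑ m ∈ Finset.range N, ((1:ℝ)/((m:ℝ)+1) - 1/((m:ℝ)+(k:ℝ)+2))
      = (harmonic (k+1) : ℝ) - ((harmonic (N+(k+1)) : ℝ) - harmonic N) := by
    intro N
    have e2 : ∑ m ∈ Finset.range N, (1:ℝ)/((m:ℝ)+(k:ℝ)+2)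
        = (harmonic ((k+1)+N) : ℝ) - harmonic (k+1) := by
      rw [harmonic_block]
      apply Finset.sum_congr rfl
      intro m _
      push_cast
      ring_nf
    rw [Nat.add_comm (k+1) N] at e2
    rw [Finset.sum_sub_distrib, ← harmonic_real N, e2]
    ring
  have hd : Tendsto (fun N : ℕ => (harmonic (N+(k+1)) : ℝ) - harmonic N) atTop (nhds 0) := by
    apply squeeze_zero (fun N => harmonic_block_nonneg N (k+1)) (fun N => harmonic_block_le N (k+1))
    have := (tendsto_one_div_add_atTop_nhds_zero_nat).const_mul ((k:ℝ)+1)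
    simp only [mul_zero] at this
    convert this using 2 with N
    push_cast
    ring
  have := tendsto_const_nhds (x := (harmonic (k+1) : ℝ)) (f := Filter.atTop (α := ℕ)) |>.sub hd
  rw [sub_zero] at this
  exact this.congr (fun N => (hps N).symm)

noncomputable def G (p : ℕ × ℕ) : ℝ :=
  1/(((p.1:ℝ)+1)*((p.2:ℝ)+1)*((p.1:ℝ)+(p.2:ℝ)+2))

lemma G_nonneg (p : ℕ × ℕ) : 0 ≤ G p := by unfold G; positivity

lemma rowH (j : ℕ) :
    HasSum (fun m : ℕ => G (j, m)) ((harmonic (j+1) : ℝ)/((j:ℝ)+1)^2) := by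
  have h := (teleH j).mul_left ((1:ℝ)/((j:ℝ)+1)^2)
  have key : (fun m : ℕ => (1:ℝ)/((j:ℝ)+1)^2 * ((1:ℝ)/((m:ℝ)+1) - 1/((m:ℝ)+(j:ℝ)+2)))
      = fun m : ℕ => G (j, m) := by
    funext m
    unfold G
    have h1 : ((j:ℝ)+1) ≠ 0 := by positivity
    have h2 : ((m:ℝ)+1) ≠ 0 := by positivity
    have h3 : ((m:ℝ)+(j:ℝ)+2) ≠ 0 := by positivity
    have h4 : ((j:ℝ)+(m:ℝ)+2) ≠ 0 := by positivity
    field_simp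
    ring
  rw [key] at h
  have hv : (harmonic (j+1) : ℝ)/((j:ℝ)+1)^2 = (1:ℝ)/((j:ℝ)+1)^2 * (harmonic (j+1) : ℝ) := by
    ring
  rw [hv]
  exact h

lemma sumG : Summable G := by
  apply (summable_prod_of_nonneg G_nonneg).mpr
  constructor
  · exact fun j => (rowH j).summable
  · apply Summable.congr sumH1
    intro j
    exact ((rowH j).tsum_eq).symm

lemma G_eq_B : ∑' (p : ℕ × ℕ), G p = ∑' j : ℕ, (harmonic (j+1) : ℝ)/((j:ℝ)+1)^2 := by
  rw [Summable.tsum_prod' sumG (fun j => (rowH j).summable)]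
  exact tsum_congr fun j => (rowH j).tsum_eq

lemma diag (n : ℕ) :
    ∑ p ∈ Finset.HasAntidiagonal.antidiagonal n, G p = 2*(harmonic (n+1) : ℝ)/((n:ℝ)+2)^2 := by
  rw [Finset.Nat.sum_antidiagonal_eq_sum_range_succ_mk]
  have step : ∀ i ∈ Finset.range (n+1),
      G (i, n-i) = (1/((n:ℝ)+2)^2) * ((1:ℝ)/((i:ℝ)+1) + 1/(((n-i : ℕ):ℝ)+1)) := by
    intro i hi
    have hi' : i ≤ n := Nat.lt_succ_iff.mp (Finset.mem_range.mp hi)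
    have hc : ((n-i:ℕ):ℝ) = (n:ℝ) - (i:ℝ) := by
      push_cast [Nat.cast_sub hi']
      ring
    have hle : (i:ℝ) ≤ (n:ℝ) := Nat.cast_le.mpr hi'
    unfold G
    rw [hc]
    simp only
    have h1 : ((i:ℝ)+1) ≠ 0 := by positivity
    have h2 : (0:ℝ) < (n:ℝ)-(i:ℝ)+1 := by linarith
    have h3 : ((n:ℝ)+2) ≠ 0 := by positivity
    have h4 : (i:ℝ)+((n:ℝ)-(i:ℝ))+2 ≠ 0 := by linarith
    field_simp
    ring
  rw [Finset.sum_congr rfl step, ← Finset.mul_sum, Finset.sum_add_distrib]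
  have r1 : ∑ i ∈ Finset.range (n+1), (1:ℝ)/((i:ℝ)+1) = (harmonic (n+1) : ℝ) :=
    (harmonic_real _).symm
  have r2 : ∑ i ∈ Finset.range (n+1), (1:ℝ)/(((n-i : ℕ):ℝ)+1) = (harmonic (n+1) : ℝ) := by
    have := Finset.sum_range_reflect (fun i : ℕ => (1:ℝ)/((i:ℝ)+1)) (n+1)
    rw [← r1, ← this]
    apply Finset.sum_congr rfl
    intro i hi
    simp [Nat.succ_sub_one]
  rw [r1, r2]
  ring

lemma G_eq_2A : ∑' (p : ℕ × ℕ), G p = ∑' n : ℕ, 2*(harmonic (n+1) : ℝ)/((n:ℝ)+2)^2 := by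
  rw [← Finset.HasAntidiagonal.sigmaAntidiagonalEquivProd.tsum_eq G,
    Summable.tsum_sigma' (f := fun c => G (Finset.HasAntidiagonal.sigmaAntidiagonalEquivProd c))
      (fun n => ((Finset.HasAntidiagonal.sigmaAntidiagonalEquivProd.summable_iff.mpr sumG).sigma_factor n))
      (Finset.HasAntidiagonal.sigmaAntidiagonalEquivProd.summable_iff.mpr sumG)]
  apply tsum_congr
  intro n
  have : ∑' (p : (Finset.HasAntidiagonal.antidiagonal n : Finset (ℕ × ℕ))),
      G (Finset.HasAntidiagonal.sigmaAntidiagonalEquivProd ⟨n, p⟩) = ∑' (p : (Finset.HasAntidiagonal.antidiagonal n : Finset (ℕ × ℕ))), G p := by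
    apply tsum_congr
    intro p
    rfl
  rw [this, Finset.tsum_subtype, _root_.diag]

lemma sumCube2 : Summable (fun n : ℕ => (1:ℝ)/((n:ℝ)+2)^3) := by
  apply Summable.of_nonneg_of_le (fun n => by positivity) _ sumCube
  intro n
  apply one_div_le_one_div_of_le (by positivity)
  have : (0:ℝ) ≤ (n:ℝ) := Nat.cast_nonneg n
  nlinarith

lemma B_eq_A_add_C :
    (∑' j : ℕ, (harmonic (j+1) : ℝ)/((j:ℝ)+1)^2)
      = (∑' m : ℕ, (harmonic (m+1) : ℝ)/((m:ℝ)+2)^2) + ∑' n : ℕ, (1:ℝ)/((n:ℝ)+1)^3 := by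
  rw [Summable.tsum_eq_zero_add sumH1, Summable.tsum_eq_zero_add sumCube]
  have e0 : (harmonic (0+1) : ℝ)/(((0:ℕ):ℝ)+1)^2 = 1 := by
    norm_num [harmonic_succ, harmonic_zero]
  have e1 : (1:ℝ)/(((0:ℕ):ℝ)+1)^3 = 1 := by norm_num
  have e2 : ∑' j : ℕ, (harmonic ((j+1)+1) : ℝ)/(((j+1:ℕ):ℝ)+1)^2
      = (∑' m : ℕ, (harmonic (m+1) : ℝ)/((m:ℝ)+2)^2) + ∑' n : ℕ, (1:ℝ)/(((n+1:ℕ):ℝ)+1)^3 := by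
    have term : ∀ j : ℕ, (harmonic ((j+1)+1) : ℝ)/(((j+1:ℕ):ℝ)+1)^2
        = (harmonic (j+1) : ℝ)/((j:ℝ)+2)^2 + (1:ℝ)/(((j+1:ℕ):ℝ)+1)^3 := by
      intro j
      rw [harmonic_succ (j+1)]
      push_cast
      have h2 : ((j:ℝ)+2) ≠ 0 := by positivity
      field_simp
      ring
    rw [tsum_congr term, Summable.tsum_add sumH2]
    apply Summable.congr sumCube2
    intro n
    push_cast
    ring_nf
  rw [e0, e1, e2]
  have e3 : ∑' n : ℕ, (1:ℝ)/(((n+1:ℕ):ℝ)+1)^3 = ∑' n : ℕ, (1:ℝ)/((n:ℝ)+2)^3 := by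
    apply tsum_congr
    intro n
    push_cast
    ring_nf
  have e4 : ∑' n : ℕ, (1:ℝ)/((n:ℝ)+2)^3 = ∑' n : ℕ, (1:ℝ)/(((n+1:ℕ):ℝ)+1)^3 := e3.symm
  rw [e3]
  ring

lemma A_eq_C :
    (∑' m : ℕ, (harmonic (m+1) : ℝ)/((m:ℝ)+2)^2) = ∑' n : ℕ, (1:ℝ)/((n:ℝ)+1)^3 := by
  have h2A : ∑' (p : ℕ × ℕ), G p = 2 * ∑' m : ℕ, (harmonic (m+1) : ℝ)/((m:ℝ)+2)^2 := by
    rw [G_eq_2A, ← tsum_mul_left]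
    apply tsum_congr
    intro n
    ring
  have := G_eq_B
  rw [h2A, B_eq_A_add_C] at this
  linarith

lemma tele2 : HasSum (fun n : ℕ => (1:ℝ)/((n:ℝ)+1)^2 - 1/((n:ℝ)+2)^2) 1 := by
  have hnn : ∀ n : ℕ, 0 ≤ (1:ℝ)/((n:ℝ)+1)^2 - 1/((n:ℝ)+2)^2 := by
    intro n
    have h1 : (1:ℝ)/((n:ℝ)+2)^2 ≤ 1/((n:ℝ)+1)^2 := by
      apply one_div_le_one_div_of_le (by positivity)
      have : (0:ℝ) ≤ (n:ℝ) := Nat.cast_nonneg n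
      nlinarith
    linarith
  rw [hasSum_iff_tendsto_nat_of_nonneg hnn]
  have hps : ∀ N : ℕ, ∑ n ∈ Finset.range N, ((1:ℝ)/((n:ℝ)+1)^2 - 1/((n:ℝ)+2)^2)
      = 1 - 1/((N:ℝ)+1)^2 := by
    intro N
    have e := Finset.sum_congr rfl (fun (n : ℕ) (_ : n ∈ Finset.range N) =>
      (by push_cast; ring_nf :
        (1:ℝ)/((n:ℝ)+1)^2 - 1/((n:ℝ)+2)^2
          = (fun i : ℕ => (1:ℝ)/((i:ℝ)+1)^2) n - (fun i : ℕ => (1:ℝ)/((i:ℝ)+1)^2) (n+1)))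
    rw [e, Finset.sum_range_sub' (fun i : ℕ => (1:ℝ)/((i:ℝ)+1)^2) N]
    norm_num
  have hd : Tendsto (fun N : ℕ => (1:ℝ)/((N:ℝ)+1)^2) atTop (nhds 0) := by
    apply squeeze_zero (fun N => by positivity) _ tendsto_one_div_add_atTop_nhds_zero_nat
    intro N
    apply one_div_le_one_div_of_le (by positivity)
    have : (0:ℝ) ≤ (N:ℝ) := Nat.cast_nonneg N
    nlinarith
  have := tendsto_const_nhds (x := (1:ℝ)) (f := Filter.atTop (α := ℕ)) |>.sub hd
  rw [sub_zero] at this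
  exact this.congr (fun N => (hps N).symm)

lemma C_lt : ∑' n : ℕ, (1:ℝ)/((n:ℝ)+1)^3 < 3/2 := by
  rw [Summable.tsum_eq_zero_add sumCube]
  have e1 : (1:ℝ)/(((0:ℕ):ℝ)+1)^3 = 1 := by norm_num
  have e3 : ∑' n : ℕ, (1:ℝ)/(((n+1:ℕ):ℝ)+1)^3 = ∑' n : ℕ, (1:ℝ)/((n:ℝ)+2)^3 := by
    apply tsum_congr; intro n; push_cast; ring_nf
  rw [e1, e3]
  have hlt : ∑' n : ℕ, (1:ℝ)/((n:ℝ)+2)^3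
      < ∑' n : ℕ, (1/2) * ((1:ℝ)/((n:ℝ)+1)^2 - 1/((n:ℝ)+2)^2) := by
    have key : ∀ n : ℕ, (1:ℝ)/((n:ℝ)+2)^3 ≤ 1/2 * ((1:ℝ)/((n:ℝ)+1)^2 - 1/((n:ℝ)+2)^2) := by
      intro n
      have hx : (0:ℝ) ≤ (n:ℝ) := Nat.cast_nonneg n
      have h1 : (0:ℝ) < (n:ℝ)+1 := by linarith
      have h2 : (0:ℝ) < (n:ℝ)+2 := by linarith
      rw [div_sub_div _ _ (by positivity) (by positivity), mul_div_assoc',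
        div_le_div_iff₀ (by positivity) (by positivity)]
      nlinarith
    exact Summable.tsum_lt_tsum (i := 0) (fun n => key n) (by norm_num) sumCube2
      (tele2.mul_left (1/2)).summable
  have := (tele2.mul_left (1/2)).tsum_eq
  rw [this] at hlt
  linarith

theorem stmt_14 :
    (∑' m : ℕ, (harmonic (m + 1) : ℝ) / ((m : ℝ) + 2) ^ 2 =
        ∑' n : ℕ, (1 : ℝ) / ((n : ℝ) + 1) ^ 3) ∧
      ∑' n : ℕ, (1 : ℝ) / ((n : ℝ) + 1) ^ 3 < 3 / 2 :=
  ⟨A_eq_C, C_lt⟩
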